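/- Let n ∈ ℕ, let A and B be diagonalizable n×n complex matrices with real eigenvalues: A = U^{-1} diag(λ₁,…,λₙ) U and B = V^{-1} diag(μ₁,…,μₙ) V for invertible U, V, and let |A| = U^{-1} diag(|λ₁|,…,|λₙ|) U, |B| = V^{-1} diag(|μ₁|,…,|μₙ|) V. Viewing matrices as operators from ℓ_1^n to ℓ_1^n, there exists a constant C independent of n, A, B such that ‖|B| − |A|‖_{L(ℓ_1^n)} ≤ C ‖U‖‖U^{-1}‖‖V‖‖V^{-1}‖ ‖B − A‖_{L(ℓ_1^n)}. -/

import Mathlib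

/-!
Conjugating by `U` and `V'` turns `B - A` into the matrix with entries `P j k * (μ k - λ j)` and
`|B| - |A|` into the one with entries `P j k * (|μ k| - |λ j|)`, where `P = U V'`. Since
`||μ| - |λ|| ≤ |μ - λ|`, the second matrix is entrywise dominated in modulus by the first, and the
`ℓ_1` operator norm (the maximal column sum of moduli) is monotone under such domination.
Undoing the conjugation costs `‖U‖‖U⁻¹‖‖V‖‖V⁻¹‖`, so `C = 1` works.
-/

open scoped ENNReal

/-- The operator norm of an `n×n` matrix viewed as an operator from `ℓ_1^n` to `ℓ_1^n`. -/
noncomputable def l1OpNorm {n : ℕ} (A : Matrix (Fin n) (Fin n) ℂ) : ℝ :=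
  ‖LinearMap.toContinuousLinearMap
    (((WithLp.linearEquiv 1 ℂ (∀ _ : Fin n, ℂ)).symm.toLinearMap.comp
      A.mulVecLin).comp
      (WithLp.linearEquiv 1 ℂ (∀ _ : Fin n, ℂ)).toLinearMap)‖

namespace Matrix

theorem mul_diagonal_sub_diagonal_mul_apply {m n R : Type*} [Fintype m] [Fintype n]
    [DecidableEq m] [DecidableEq n] [CommRing R] (P : Matrix m n R) (a : n → R) (b : m → R)
    (i : m) (j : n) : (P * diagonal a - diagonal b * P) i j = P i j * (a j - b i) := by
  simp only [sub_apply, mul_diagonal, diagonal_mul]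
  ring

variable {l m n 𝕜 : Type*} [Fintype l] [Fintype m] [Fintype n]
  [NontriviallyNormedField 𝕜] [CompleteSpace 𝕜]

noncomputable def toL1CLM (A : Matrix m n 𝕜) : WithLp 1 (n → 𝕜) →L[𝕜] WithLp 1 (m → 𝕜) :=
  LinearMap.toContinuousLinearMap
    (((WithLp.linearEquiv 1 𝕜 (m → 𝕜)).symm.toLinearMap.comp A.mulVecLin).comp
      (WithLp.linearEquiv 1 𝕜 (n → 𝕜)).toLinearMap)

theorem ofLp_toL1CLM_apply (A : Matrix m n 𝕜) (x : WithLp 1 (n → 𝕜)) :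
    WithLp.ofLp (A.toL1CLM x) = A *ᵥ WithLp.ofLp x :=
  rfl

theorem toL1CLM_mul (A : Matrix l m 𝕜) (B : Matrix m n 𝕜) :
    (A * B).toL1CLM = A.toL1CLM.comp B.toL1CLM := by
  ext x : 1
  apply WithLp.ofLp_injective
  simp only [ofLp_toL1CLM_apply, ContinuousLinearMap.comp_apply, mulVec_mulVec]

theorem norm_toL1CLM_mul_le (A : Matrix l m 𝕜) (B : Matrix m n 𝕜) :
    ‖(A * B).toL1CLM‖ ≤ ‖A.toL1CLM‖ * ‖B.toL1CLM‖ := by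
  rw [toL1CLM_mul]
  exact ContinuousLinearMap.opNorm_comp_le _ _

theorem sum_norm_col_le_norm_toL1CLM (A : Matrix m n 𝕜) (k : n) :
    ∑ j, ‖A j k‖ ≤ ‖A.toL1CLM‖ := by
  classical
  have h := A.toL1CLM.le_opNorm (PiLp.single 1 k 1)
  rw [PiLp.norm_single, norm_one, mul_one, PiLp.norm_eq_of_L1] at h
  simpa [ofLp_toL1CLM_apply] using h

theorem norm_toL1CLM_apply_le (A : Matrix m n 𝕜) (x : WithLp 1 (n → 𝕜)) :
    ‖A.toL1CLM x‖ ≤ ∑ j, (∑ i, ‖A i j‖) * ‖x j‖ := by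
  calc ‖A.toL1CLM x‖ = ∑ i, ‖∑ j, A i j * x j‖ := by
        simp only [PiLp.norm_eq_of_L1, ofLp_toL1CLM_apply, mulVec, dotProduct]
    _ ≤ ∑ i, ∑ j, ‖A i j‖ * ‖x j‖ := by
        gcongr with i
        exact (norm_sum_le _ _).trans_eq (by simp only [norm_mul])
    _ = ∑ j, (∑ i, ‖A i j‖) * ‖x j‖ := by
        rw [Finset.sum_comm]
        simp only [Finset.sum_mul]

theorem norm_toL1CLM_le_of_norm_le {A B : Matrix m n 𝕜}
    (h : ∀ i j, ‖A i j‖ ≤ ‖B i j‖) : ‖A.toL1CLM‖ ≤ ‖B.toL1CLM‖ := by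
  refine A.toL1CLM.opNorm_le_bound (norm_nonneg _) fun x => ?_
  calc ‖A.toL1CLM x‖ ≤ ∑ j, (∑ i, ‖A i j‖) * ‖x j‖ := A.norm_toL1CLM_apply_le x
    _ ≤ ∑ j, ‖B.toL1CLM‖ * ‖x j‖ := by
        gcongr with j
        exact (Finset.sum_le_sum fun i _ => h i j).trans (B.sum_norm_col_le_norm_toL1CLM j)
    _ = ‖B.toL1CLM‖ * ‖x‖ := by rw [PiLp.norm_eq_of_L1, Finset.mul_sum]

theorem norm_toL1CLM_mul_mul_le {o : Type*} [Fintype o] (A : Matrix l m 𝕜) (B : Matrix m n 𝕜)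
    (C : Matrix n o 𝕜) :
    ‖(A * B * C).toL1CLM‖ ≤ ‖A.toL1CLM‖ * ‖B.toL1CLM‖ * ‖C.toL1CLM‖ :=
  (norm_toL1CLM_mul_le _ _).trans
    (mul_le_mul_of_nonneg_right (norm_toL1CLM_mul_le _ _) (norm_nonneg _))

theorem norm_toL1CLM_mul_diagonal_sub_diagonal_mul_le [DecidableEq m] [DecidableEq n]
    (P : Matrix m n 𝕜) {a c : n → 𝕜} {b d : m → 𝕜} (h : ∀ i j, ‖a j - b i‖ ≤ ‖c j - d i‖) :
    ‖(P * diagonal a - diagonal b * P).toL1CLM‖ ≤ ‖(P * diagonal c - diagonal d * P).toL1CLM‖ := by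
  refine norm_toL1CLM_le_of_norm_le fun i j => ?_
  simp only [mul_diagonal_sub_diagonal_mul_apply, norm_mul]
  exact mul_le_mul_of_nonneg_left (h i j) (norm_nonneg _)

theorem norm_toL1CLM_le_of_mul_eq_one [DecidableEq n] {U U' V V' : Matrix n n 𝕜} (hU : U' * U = 1)
    (hV : V' * V = 1) (M : Matrix n n 𝕜) :
    ‖M.toL1CLM‖ ≤ ‖U'.toL1CLM‖ * ‖(U * M * V').toL1CLM‖ * ‖V.toL1CLM‖ := by
  have hM : U' * (U * M * V') * V = M := by
    calc U' * (U * M * V') * V = U' * U * M * (V' * V) := by simp only [Matrix.mul_assoc]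
      _ = M := by rw [hU, hV, Matrix.one_mul, Matrix.mul_one]
  simpa only [hM] using norm_toL1CLM_mul_mul_le U' (U * M * V') V

end Matrix

theorem mul_sub_mul_eq_of_mul_eq_one {R : Type*} [Ring R] {U U' V V' : R} (hU : U * U' = 1)
    (hV : V * V' = 1) (D E : R) :
    U * (V' * D * V - U' * E * U) * V' = U * V' * D - E * (U * V') := by
  calc U * (V' * D * V - U' * E * U) * V' = U * V' * D * (V * V') - U * U' * E * (U * V') := by
        noncomm_ring
    _ = U * V' * D - E * (U * V') := by rw [hU, hV, mul_one, one_mul]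

theorem l1OpNorm_eq_norm_toL1CLM {n : ℕ} (A : Matrix (Fin n) (Fin n) ℂ) :
    l1OpNorm A = ‖A.toL1CLM‖ :=
  rfl

/-- There is a universal (dimension-independent) constant `C` such that for all `n`, all
diagonalizable `n×n` complex matrices `A = U⁻¹ diag(λ) U` and `B = V⁻¹ diag(μ) V` with real
eigenvalues, and `|A| = U⁻¹ diag(|λ|) U`, `|B| = V⁻¹ diag(|μ|) V`, one has, in the operator
norm of `L(ℓ_1^n)`,
`‖|B| − |A|‖ ≤ C ‖U‖‖U⁻¹‖‖V‖‖V⁻¹‖ ‖B − A‖`. -/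
theorem stmt_19 :
    ∃ C : ℝ, 0 < C ∧
      ∀ (n : ℕ) (U U' V V' : Matrix (Fin n) (Fin n) ℂ) (lam mu : Fin n → ℝ),
        U * U' = 1 → U' * U = 1 → V * V' = 1 → V' * V = 1 →
        l1OpNorm
            (V' * Matrix.diagonal (fun k => ((|mu k| : ℝ) : ℂ)) * V -
              U' * Matrix.diagonal (fun j => ((|lam j| : ℝ) : ℂ)) * U) ≤
          C * l1OpNorm U * l1OpNorm U' * l1OpNorm V * l1OpNorm V' *
            l1OpNorm
              (V' * Matrix.diagonal (fun k => (mu k : ℂ)) * V -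
                U' * Matrix.diagonal (fun j => (lam j : ℂ)) * U) := by
  refine ⟨1, one_pos, fun n U U' V V' lam mu hUU' hU'U hVV' hV'V => ?_⟩
  set E := V' * Matrix.diagonal (fun k => ((|mu k| : ℝ) : ℂ)) * V -
    U' * Matrix.diagonal (fun j => ((|lam j| : ℝ) : ℂ)) * U
  set F := V' * Matrix.diagonal (fun k => (mu k : ℂ)) * V -
    U' * Matrix.diagonal (fun j => (lam j : ℂ)) * U
  have hdom : ∀ j k, ‖((|mu k| : ℝ) : ℂ) - ((|lam j| : ℝ) : ℂ)‖ ≤ ‖(mu k : ℂ) - (lam j : ℂ)‖ :=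
    fun j k => by
      simpa only [← Complex.ofReal_sub, Complex.norm_real, Real.norm_eq_abs]
        using abs_abs_sub_abs_le_abs_sub (mu k) (lam j)
  have hconj : ‖(U * E * V').toL1CLM‖ ≤ ‖(U * F * V').toL1CLM‖ := by
    rw [mul_sub_mul_eq_of_mul_eq_one hUU' hVV', mul_sub_mul_eq_of_mul_eq_one hUU' hVV']
    exact (U * V').norm_toL1CLM_mul_diagonal_sub_diagonal_mul_le hdom
  simp only [l1OpNorm_eq_norm_toL1CLM]
  calc ‖E.toL1CLM‖ ≤ ‖U'.toL1CLM‖ * ‖(U * E * V').toL1CLM‖ * ‖V.toL1CLM‖ :=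
        Matrix.norm_toL1CLM_le_of_mul_eq_one hU'U hV'V E
    _ ≤ ‖U'.toL1CLM‖ * ‖(U * F * V').toL1CLM‖ * ‖V.toL1CLM‖ := by gcongr
    _ ≤ ‖U'.toL1CLM‖ * (‖U.toL1CLM‖ * ‖F.toL1CLM‖ * ‖V'.toL1CLM‖) * ‖V.toL1CLM‖ := by
        gcongr
        exact Matrix.norm_toL1CLM_mul_mul_le U F V'
    _ = 1 * ‖U.toL1CLM‖ * ‖U'.toL1CLM‖ * ‖V.toL1CLM‖ * ‖V'.toL1CLM‖ * ‖F.toL1CLM‖ := by ring
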